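/- Every λ-term typable in the intersection type system D is strongly normalizing for β-reduction. -/

import Mathlib

/-- Untyped λ-terms in de Bruijn representation. -/
inductive Term : Type
  | var : ℕ → Term
  | lam : Term → Term
  | app : Term → Term → Term
  deriving DecidableEq

namespace Term

/-- Shift (lift) all de Bruijn indices ≥ d by one. -/
def lift (d : ℕ) : Term → Term
  | var n => var (if n < d then n else n + 1)
  | lam t => lam (lift (d + 1) t)
  | app t u => app (lift d t) (lift d u)

/-- Capture-avoiding substitution `t[k := u]` (de Bruijn style). -/
def subst : Term → ℕ → Term → Term
  | var n, k, u => if n = k then u else var (if n < k then n else n - 1)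
  | lam t, k, u => lam (subst t (k + 1) (lift 0 u))
  | app t v, k, u => app (subst t k u) (subst v k u)

/-- Swap the de Bruijn indices d and d+1 (exchange of two adjacent binders). -/
def swap (d : ℕ) : Term → Term
  | var n => var (if n = d then d + 1 else if n = d + 1 then d else n)
  | lam t => lam (swap (d + 1) t)
  | app t u => app (swap d t) (swap d u)

end Term

/-- The four reduction rules. -/
inductive Rule | beta | delta | gamma | assoc

/-- One-step reduction by a given rule (closed under congruence).
β: (λx.M N) ▷ M[x:=N];
δ: (λy.λx.M N) ▷ λx.(λy.M N), x ∉ FV(N);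
γ: (λx.M N P) ▷ (λx.(M P) N), x ∉ FV(P);
assoc: (M (λx.N P)) ▷ (λx.(M N) P), x ∉ FV(M).
Freshness conditions are realized by lifting. -/
inductive Step : Rule → Term → Term → Prop
  | beta (M N) : Step .beta (.app (.lam M) N) (Term.subst M 0 N)
  | delta (M N) : Step .delta (.app (.lam (.lam M)) N)
      (.lam (.app (.lam (Term.swap 0 M)) (Term.lift 0 N)))
  | gamma (M N P) : Step .gamma (.app (.app (.lam M) N) P)
      (.app (.lam (.app M (Term.lift 0 P))) N)
  | assoc (M N P) : Step .assoc (.app M (.app (.lam N) P))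
      (.app (.lam (.app (Term.lift 0 M) N)) P)
  | appCongL {r t t'} (u) : Step r t t' → Step r (.app t u) (.app t' u)
  | appCongR {r u u'} (t) : Step r u u' → Step r (.app t u) (.app t u')
  | lamCong {r t t'} : Step r t t' → Step r (.lam t) (.lam t')

/-- One-step reduction by the union of the four rules. -/
def StepAll (t t' : Term) : Prop := ∃ r, Step r t t'

/-- Strong normalization for the union of β, δ, γ, assoc. -/
def SN (t : Term) : Prop := Acc (fun a b => StepAll b a) t

/-- Strong normalization for β alone. -/
def SNbeta (t : Term) : Prop := Acc (fun a b => Step .beta b a) t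

mutual
/-- Simple types: atoms and arrows with simple codomain. -/
inductive STy : Type
  | atom : ℕ → STy
  | arrow : Ty → STy → STy
/-- Types of system D: intersections of simple types. -/
inductive Ty : Type
  | simple : STy → Ty
  | inter : STy → Ty → Ty
end

/-- Typing judgment of system D (contexts are lists of types, de Bruijn). -/
inductive Typing : List Ty → Term → Ty → Prop
  | var {Γ n A} : Γ[n]? = some A → Typing Γ (.var n) A
  | app {Γ M N A B} : Typing Γ M (.simple (.arrow A B)) → Typing Γ N A →
      Typing Γ (.app M N) (.simple B)
  | lam {Γ M A B} : Typing (A :: Γ) M (.simple B) →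
      Typing Γ (.lam M) (.simple (.arrow A B))
  | interI {Γ M A B} : Typing Γ M (.simple A) → Typing Γ M B →
      Typing Γ M (.inter A B)
  | interE1 {Γ M A B} : Typing Γ M (.inter A B) → Typing Γ M (.simple A)
  | interE2 {Γ M A B} : Typing Γ M (.inter A B) → Typing Γ M B

/-- A term is typable in system D. -/
def Typable (t : Term) : Prop := ∃ Γ A, Typing Γ t A

/-- (H M₁ ... Mₙ). -/
def appList (H : Term) (Ms : List Term) : Term := Ms.foldl .app H

/-!
Tait's reducibility method. A simple type denotes a set of β-strongly-normalizing terms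
(all of them at an atom; at `A → B`, those mapping reducible arguments to reducible results),
and an intersection denotes the intersection of its components. These sets contain the
variables, are closed under β-reduction, and are closed under head β-expansion by a
strongly normalizing argument, so every typing derivation is sound for them under any
reducible simultaneous substitution; the identity substitution then gives strong normalization.
-/

namespace Term

theorem lift_lift (t : Term) {d e : ℕ} (h : e ≤ d) :
    lift e (lift d t) = lift (d + 1) (lift e t) := by
  induction t generalizing d e with
  | var n => simp only [lift]; split_ifs <;> grind
  | lam t ih => simp only [lift, ih (show e + 1 ≤ d + 1 by omega)]
  | app t u iht ihu => simp only [lift, iht h, ihu h]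

def scons (u : Term) (σ : ℕ → Term) : ℕ → Term
  | 0 => u
  | n + 1 => σ n

def up (σ : ℕ → Term) : ℕ → Term :=
  scons (var 0) fun n => lift 0 (σ n)

def msubst (σ : ℕ → Term) : Term → Term
  | var n => σ n
  | lam t => lam (msubst (up σ) t)
  | app t u => app (msubst σ t) (msubst σ u)

theorem msubst_congr {σ τ : ℕ → Term} (h : ∀ n, σ n = τ n) (t : Term) :
    msubst σ t = msubst τ t := by
  induction t generalizing σ τ with
  | var n => exact h n
  | lam t ih =>
    refine congrArg lam (ih fun n => ?_)
    cases n <;> simp only [up, scons, h]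
  | app t u iht ihu => simp only [msubst, iht h, ihu h]

theorem msubst_var (t : Term) : msubst var t = t := by
  induction t with
  | var n => rfl
  | lam t ih =>
    refine congrArg lam ((msubst_congr (fun n => ?_) t).trans ih)
    cases n <;> rfl
  | app t u iht ihu => simp only [msubst, iht, ihu]

theorem msubst_lift (t : Term) (σ : ℕ → Term) (d : ℕ) :
    msubst σ (lift d t) = msubst (fun n => σ (if n < d then n else n + 1)) t := by
  induction t generalizing σ d with
  | var n => rfl
  | lam t ih =>
    refine congrArg lam ((ih _ _).trans (msubst_congr (fun n => ?_) t))
    cases n with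
    | zero => rfl
    | succ n => by_cases h : n < d <;> simp [up, scons, h]
  | app t u iht ihu => simp only [lift, msubst, iht, ihu]

theorem msubst_scons_lift_zero (t u : Term) (σ : ℕ → Term) :
    msubst (scons u σ) (lift 0 t) = msubst σ t := by
  rw [msubst_lift]
  rfl

theorem lift_msubst (t : Term) (σ : ℕ → Term) (d : ℕ) :
    lift d (msubst σ t) = msubst (fun n => lift d (σ n)) t := by
  induction t generalizing σ d with
  | var n => rfl
  | lam t ih =>
    refine congrArg lam ((ih _ _).trans (msubst_congr (fun n => ?_) t))
    cases n with
    | zero => rfl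
    | succ n => exact (lift_lift (σ n) (Nat.zero_le d)).symm
  | app t u iht ihu => simp only [lift, msubst, iht, ihu]

theorem msubst_msubst (t : Term) (σ τ : ℕ → Term) :
    msubst τ (msubst σ t) = msubst (fun n => msubst τ (σ n)) t := by
  induction t generalizing σ τ with
  | var n => rfl
  | lam t ih =>
    refine congrArg lam ((ih _ _).trans (msubst_congr (fun n => ?_) t))
    cases n with
    | zero => rfl
    | succ n => simp only [up, scons, msubst_scons_lift_zero, lift_msubst]
  | app t u iht ihu => simp only [msubst, iht, ihu]

theorem subst_eq_msubst (t u : Term) (k : ℕ) :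
    subst t k u = msubst (fun n => if n = k then u else var (if n < k then n else n - 1)) t := by
  induction t generalizing k u with
  | var n => rfl
  | lam t ih =>
    refine congrArg lam ((ih _ _).trans (msubst_congr (fun n => ?_) t))
    cases n with
    | zero => simp [up, scons]
    | succ n => simp only [up, scons]; split_ifs <;> grind [lift]
  | app t v iht ihv => simp only [subst, msubst, iht, ihv]

theorem subst_zero_eq_msubst (t u : Term) : subst t 0 u = msubst (scons u var) t := by
  rw [subst_eq_msubst]
  exact msubst_congr (fun n => by cases n <;> simp [scons]) t

theorem subst_msubst_up (t u : Term) (σ : ℕ → Term) :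
    subst (msubst (up σ) t) 0 u = msubst (scons u σ) t := by
  rw [subst_zero_eq_msubst, msubst_msubst]
  refine msubst_congr (fun n => ?_) t
  cases n with
  | zero => rfl
  | succ n => simp only [up, scons, msubst_scons_lift_zero, msubst_var]

theorem msubst_subst (t u : Term) (σ : ℕ → Term) :
    msubst σ (subst t 0 u) = subst (msubst (up σ) t) 0 (msubst σ u) := by
  rw [subst_msubst_up, subst_zero_eq_msubst, msubst_msubst]
  exact msubst_congr (fun n => by cases n <;> rfl) t

theorem step_msubst {t t' : Term} (h : Step .beta t t') (σ : ℕ → Term) :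
    Step .beta (msubst σ t) (msubst σ t') := by
  generalize hr : Rule.beta = r at h
  induction h generalizing σ with
  | beta => rw [msubst_subst]; exact Step.beta _ _
  | delta | gamma | assoc => cases hr
  | appCongL u _ ih => exact Step.appCongL _ (ih σ hr)
  | appCongR t _ ih => exact Step.appCongR _ (ih σ hr)
  | lamCong _ ih => exact Step.lamCong (ih (up σ) hr)

theorem step_subst {t t' : Term} (h : Step .beta t t') (u : Term) :
    Step .beta (subst t 0 u) (subst t' 0 u) := by
  simpa only [subst_zero_eq_msubst] using step_msubst h (scons u var)

end Term

theorem SNbeta.of_subst {t u : Term} (h : SNbeta (Term.subst t 0 u)) : SNbeta t :=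
  Subrelation.accessible (fun hs => Term.step_subst hs u)
    (InvImage.accessible (Term.subst · 0 u) h)

theorem SNbeta.lam {t : Term} (h : SNbeta t) : SNbeta (.lam t) := by
  induction h with
  | intro t _ ih =>
    refine Acc.intro _ fun t' hs => ?_
    cases hs with
    | lamCong hs => exact ih _ hs

mutual
def RedS : STy → Term → Prop
  | .atom _, t => SNbeta t
  | .arrow A B, t => SNbeta t ∧ ∀ u, Red A u → RedS B (.app t u)
def Red : Ty → Term → Prop
  | .simple S, t => RedS S t
  | .inter S B, t => RedS S t ∧ Red B t
end

def Neutral (t : Term) : Prop := ∀ M, t ≠ .lam M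

mutual
theorem RedS.snBeta : ∀ {S : STy} {t : Term}, RedS S t → SNbeta t
  | .atom _, _, h => h
  | .arrow _ _, _, h => h.1
theorem Red.snBeta : ∀ {A : Ty} {t : Term}, Red A t → SNbeta t
  | .simple _, _, h => RedS.snBeta h
  | .inter _ _, _, h => RedS.snBeta h.1
end

mutual
theorem RedS.step : ∀ {S : STy} {t t' : Term}, RedS S t → Step .beta t t' → RedS S t'
  | .atom _, _, _, h, hs => h.inv hs
  | .arrow _ _, _, _, h, hs => ⟨h.1.inv hs, fun u hu => (h.2 u hu).step (.appCongL u hs)⟩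
theorem Red.step : ∀ {A : Ty} {t t' : Term}, Red A t → Step .beta t t' → Red A t'
  | .simple _, _, _, h, hs => RedS.step h hs
  | .inter _ _, _, _, h, hs => ⟨RedS.step h.1 hs, Red.step h.2 hs⟩
end

mutual
theorem RedS.of_neutral : ∀ {S : STy} {t : Term}, Neutral t →
    (∀ t', Step .beta t t' → RedS S t') → RedS S t
  | .atom _, _, _, h => Acc.intro _ h
  | .arrow _ _, _, hn, h => by
    refine ⟨Acc.intro _ fun t' hs => (h t' hs).snBeta, fun u hu => ?_⟩
    induction hu.snBeta with
    | intro u _ ih =>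
      refine RedS.of_neutral (fun _ => Term.noConfusion) fun t' hs => ?_
      cases hs with
      | beta M _ => exact absurd rfl (hn M)
      | appCongL _ hs => exact (h _ hs).2 u hu
      | appCongR _ hs => exact ih _ hs (hu.step hs)
theorem Red.of_neutral : ∀ {A : Ty} {t : Term}, Neutral t →
    (∀ t', Step .beta t t' → Red A t') → Red A t
  | .simple _, _, hn, h => RedS.of_neutral hn h
  | .inter _ _, _, hn, h =>
    ⟨RedS.of_neutral hn fun t' hs => (h t' hs).1, Red.of_neutral hn fun t' hs => (h t' hs).2⟩
end

theorem red_var (A : Ty) (n : ℕ) : Red A (.var n) :=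
  Red.of_neutral (fun _ => Term.noConfusion) fun _ hs => by cases hs

theorem redS_app_lam {A : Ty} {B : STy} {M : Term} (hM : SNbeta M)
    (hbody : ∀ u, Red A u → RedS B (Term.subst M 0 u)) {u : Term} (hu : Red A u) :
    RedS B (.app (.lam M) u) := by
  induction hM generalizing u with
  | intro M _ ihM =>
    induction hu.snBeta with
    | intro u _ ihu =>
      refine RedS.of_neutral (fun _ => Term.noConfusion) fun t' hs => ?_
      cases hs with
      | beta => exact hbody u hu
      | appCongL _ hs =>
        cases hs with
        | lamCong hs =>
          exact ihM _ hs (fun v hv => (hbody v hv).step (Term.step_subst hs v)) hu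
      | appCongR _ hs => exact ihu _ hs (hu.step hs)

theorem redS_lam {A : Ty} {B : STy} {M : Term}
    (hbody : ∀ u, Red A u → RedS B (Term.subst M 0 u)) : RedS (.arrow A B) (.lam M) :=
  have hM : SNbeta M := SNbeta.of_subst (hbody _ (red_var A 0)).snBeta
  ⟨hM.lam, fun _ => redS_app_lam hM hbody⟩

theorem Typing.red_msubst {Γ : List Ty} {M : Term} {A : Ty} (h : Typing Γ M A)
    {σ : ℕ → Term} (hσ : ∀ n B, Γ[n]? = some B → Red B (σ n)) : Red A (Term.msubst σ M) := by
  induction h generalizing σ with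
  | var hA => exact hσ _ _ hA
  | app _ _ ihM ihN => exact (ihM hσ).2 _ (ihN hσ)
  | lam _ ih =>
    refine redS_lam fun u hu => ?_
    rw [Term.subst_msubst_up]
    refine ih fun n B hB => ?_
    cases n with
    | zero => cases hB; exact hu
    | succ n => exact hσ n B hB
  | interI _ _ ih₁ ih₂ => exact ⟨ih₁ hσ, ih₂ hσ⟩
  | interE1 _ ih => exact (ih hσ).1
  | interE2 _ ih => exact (ih hσ).2

/-- Every term typable in system D is β-strongly-normalizing. -/
theorem snBeta_of_typable (t : Term) (h : Typable t) : SNbeta t := by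
  obtain ⟨Γ, A, hT⟩ := h
  have hred : Red A (Term.msubst .var t) := hT.red_msubst fun n B _ => red_var B n
  rw [Term.msubst_var] at hred
  exact hred.snBeta
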